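/- Let u be positive-definite satisfying D(φu) = ψu, with monic orthogonal polynomials (p_n) and Sobolev orthogonal polynomials (Q_n) with respect to ⟨p,r⟩_S = ⟨u, pr⟩ + λ⟨u, p'r'⟩, λ > 0. Let H = max{deg ψ − 1, deg φ} and 𝒥r = φr + λ(φ'−ψ)r' − λφr''. Then for n ≥ deg φ, the polynomial 𝒥Q_n lies in the span of {p_{n−deg φ}, …, p_{n+H}}: the coefficients ⟨u, p_ν · 𝒥Q_n⟩ / ⟨u, p_ν²⟩ vanish for ν < n − deg φ. -/

import Mathlib

/-!
Writing `⟨·,·⟩_S` for the Sobolev form, the Pearson equation `D(φu) = ψu` gives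
`⟨φ s, r⟩_S = ⟨u, s 𝒥r⟩` for all polynomials `s, r`. Taking `s = p_ν` and `r = Q_n`, the left
side is the Sobolev product of `Q_n` with a polynomial of degree at most `ν + deg φ`, which vanishes
when `ν + deg φ < n` because `Q_0, …, Q_{n-1}` span the polynomials of degree `< n`.
-/

open Polynomial

namespace Polynomial

section MonicFamily

variable {R : Type*} [Ring R] [Nontrivial R] {Q : ℕ → R[X]}

theorem span_image_Iio_eq_degreeLT_of_monic (hmonic : ∀ k, (Q k).Monic)
    (hdeg : ∀ k, (Q k).natDegree = k) (n : ℕ) :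
    Submodule.span R (Q '' Set.Iio n) = degreeLT R n :=
  Sequence.span_degreeLT
    ⟨Q, fun k => by rw [degree_eq_natDegree (hmonic k).ne_zero, hdeg]⟩
    fun k _ => (hmonic k).leadingCoeff ▸ isUnit_one

theorem _root_.LinearMap.eq_zero_of_degree_lt_of_monic {M : Type*} [AddCommGroup M] [Module R M]
    (hmonic : ∀ k, (Q k).Monic) (hdeg : ∀ k, (Q k).natDegree = k) {n : ℕ}
    (f : R[X] →ₗ[R] M) (hf : ∀ k < n, f (Q k) = 0) {q : R[X]} (hq : q.degree < n) :
    f q = 0 := by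
  have hspan : Submodule.span R (Q '' Set.Iio n) ≤ LinearMap.ker f :=
    Submodule.span_le.mpr <| Set.image_subset_iff.mpr hf
  rw [span_image_Iio_eq_degreeLT_of_monic hmonic hdeg] at hspan
  exact hspan (mem_degreeLT.mpr hq)

end MonicFamily

section Sobolev

variable {R : Type*} [CommRing R]

noncomputable def sobolevForm (u : R[X] →ₗ[R] R) (lam : R) : R[X] →ₗ[R] R[X] →ₗ[R] R :=
  LinearMap.mk₂ R (fun p r => u (p * r) + lam * u (derivative p * derivative r))
    (fun p₁ p₂ r => by simp only [add_mul, map_add]; ring)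
    (fun c p r => by simp only [smul_mul_assoc, map_smul, smul_eq_mul]; ring)
    (fun p r₁ r₂ => by simp only [mul_add, map_add]; ring)
    (fun c p r => by simp only [mul_smul_comm, map_smul, smul_eq_mul]; ring)

@[simp]
theorem sobolevForm_apply (u : R[X] →ₗ[R] R) (lam : R) (p r : R[X]) :
    sobolevForm u lam p r = u (p * r) + lam * u (derivative p * derivative r) :=
  rfl

/-- The operator `𝒥` of the paper. -/
noncomputable def sobolevMulAdjoint (φ ψ : R[X]) (lam : R) (r : R[X]) : R[X] :=
  φ * r + C lam * (derivative φ - ψ) * derivative r - C lam * φ * derivative (derivative r)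

theorem sobolevForm_mul_left {u : R[X] →ₗ[R] R} {φ ψ : R[X]} (lam : R)
    (hpearson : ∀ r, -u (φ * derivative r) = u (ψ * r)) (s r : R[X]) :
    sobolevForm u lam (φ * s) r = u (s * sobolevMulAdjoint φ ψ lam r) := by
  have hsplit : s * sobolevMulAdjoint φ ψ lam r
      = (φ * s) * r + C lam * (derivative (φ * s) * derivative r)
        - C lam * (φ * derivative (s * derivative r) + ψ * (s * derivative r)) := by
    simp only [sobolevMulAdjoint, derivative_mul]
    ring
  have hvanish : u (φ * derivative (s * derivative r) + ψ * (s * derivative r)) = 0 := by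
    rw [map_add, ← hpearson, add_neg_cancel]
  rw [hsplit, map_sub, map_add, C_mul', C_mul', map_smul, map_smul, hvanish, smul_zero, sub_zero,
    smul_eq_mul, sobolevForm_apply]

end Sobolev

end Polynomial

theorem J_Qn_expansion_in_pn_general (u : Polynomial ℝ →ₗ[ℝ] ℝ) (φ ψ : Polynomial ℝ)
    (lam : ℝ)
    (heq : ∀ r : Polynomial ℝ, -(u (φ * derivative r)) = u (ψ * r))
    (p Q : ℕ → Polynomial ℝ)
    (hpdeg : ∀ n, (p n).natDegree = n)
    (hQmonic : ∀ n, (Q n).Monic) (hQdeg : ∀ n, (Q n).natDegree = n)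
    (hQorth : ∀ n m, n ≠ m →
      u (Q n * Q m) + lam * u (derivative (Q n) * derivative (Q m)) = 0) :
    ∀ n ν : ℕ, φ.natDegree ≤ n → ν + φ.natDegree < n →
      u (p ν * (φ * Q n + C lam * (derivative φ - ψ) * derivative (Q n)
          - C lam * φ * derivative (derivative (Q n)))) = 0 := by
  intro n ν _ hν
  have hdeg : (φ * p ν).degree < n := by
    refine degree_le_natDegree.trans_lt ?_
    exact_mod_cast natDegree_mul_le.trans_lt (by rw [hpdeg]; omega)
  have horth : ∀ k < n, (sobolevForm u lam).flip (Q n) (Q k) = 0 := fun k hk =>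
    hQorth k n hk.ne
  exact (sobolevForm_mul_left lam heq (p ν) (Q n)).symm.trans
    (LinearMap.eq_zero_of_degree_lt_of_monic hQmonic hQdeg _ horth hdeg)

/-- In the semiclassical Sobolev setting, for n ≥ deg φ the polynomial 𝒥Q_n lies
in the span of p_{n−deg φ}, …, p_{n+H}: its coefficients ⟨u, p_ν·𝒥Q_n⟩/⟨u, p_ν²⟩
vanish when ν + deg φ < n, where 𝒥r = φr + λ(φ'−ψ)r' − λφr''. -/
theorem J_Qn_expansion_in_pn (u : Polynomial ℝ →ₗ[ℝ] ℝ) (φ ψ : Polynomial ℝ)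
    (lam : ℝ) (hlam : 0 < lam)
    (hpos : ∀ q : Polynomial ℝ, q ≠ 0 → 0 < u (q * q))
    (heq : ∀ r : Polynomial ℝ, -(u (φ * derivative r)) = u (ψ * r))
    (p Q : ℕ → Polynomial ℝ)
    (hpmonic : ∀ n, (p n).Monic) (hpdeg : ∀ n, (p n).natDegree = n)
    (hporth : ∀ n m, n ≠ m → u (p n * p m) = 0)
    (hQmonic : ∀ n, (Q n).Monic) (hQdeg : ∀ n, (Q n).natDegree = n)
    (hQorth : ∀ n m, n ≠ m →
      u (Q n * Q m) + lam * u (derivative (Q n) * derivative (Q m)) = 0) :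
    ∀ n ν : ℕ, φ.natDegree ≤ n → ν + φ.natDegree < n →
      u (p ν * (φ * Q n + C lam * (derivative φ - ψ) * derivative (Q n)
          - C lam * φ * derivative (derivative (Q n)))) = 0 :=
  J_Qn_expansion_in_pn_general u φ ψ lam heq p Q hpdeg hQmonic hQdeg hQorth
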